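/- Along solutions of the error system with |γ̄| = 1 and δ = v̄ − (g/k₁ᵛ)(e₃ − γ̄), one has d/dt (1 − e₃ᵀγ̄) = −k₁ʳ (δ × γ̄)ᵀ(e₃ × γ̄) − (g k₁ʳ/k₁ᵛ)|e₃ × γ̄|², and hence d/dt (1 − e₃ᵀγ̄) ≤ k₁ʳ |δ| |e₃ × γ̄| − (g k₁ʳ/k₁ᵛ)|e₃ × γ̄|². -/

import Mathlib

/-
Since δ + (g/k₁ᵛ)e₃ differs from v̄ by a multiple of γ̄, one has δ × γ̄ + (g/k₁ᵛ) e₃ × γ̄ = v̄ × γ̄, so the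
claimed derivative is −k₁ʳ (v̄ × γ̄)ᵀ(e₃ × γ̄); by the scalar triple product this is −e₃ᵀγ̄'. The bound is
Cauchy–Schwarz together with |δ × γ̄| ≤ |δ| |γ̄| = |δ|, both read off Lagrange's identity
(a × b)ᵀ(c × d) = (aᵀc)(bᵀd) − (aᵀd)(bᵀc).
-/

open Matrix

noncomputable section

def cross3 (u v : Fin 3 → ℝ) : Fin 3 → ℝ :=
  ![u 1 * v 2 - u 2 * v 1, u 2 * v 0 - u 0 * v 2, u 0 * v 1 - u 1 * v 0]

def norm3 (u : Fin 3 → ℝ) : ℝ := Real.sqrt (u ⬝ᵥ u)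

def e3 : Fin 3 → ℝ := ![0, 0, 1]

theorem cross3_eq_crossProduct (u v : Fin 3 → ℝ) : cross3 u v = u ⨯₃ v := rfl

theorem dotProduct_self_nonneg {n R : Type*} [Fintype n] [Ring R] [LinearOrder R]
    [IsStrictOrderedRing R] (u : n → R) : 0 ≤ u ⬝ᵥ u :=
  Finset.sum_nonneg fun i _ => mul_self_nonneg (u i)

theorem norm3_sq (u : Fin 3 → ℝ) : norm3 u ^ 2 = u ⬝ᵥ u :=
  Real.sq_sqrt (dotProduct_self_nonneg u)

theorem norm3_cross_le (u v : Fin 3 → ℝ) : norm3 (u ⨯₃ v) ≤ norm3 u * norm3 v := by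
  rw [norm3, norm3, norm3, ← Real.sqrt_mul (dotProduct_self_nonneg u)]
  refine Real.sqrt_le_sqrt ?_
  rw [cross_dot_cross, dotProduct_comm v u]
  nlinarith [sq_nonneg (u ⬝ᵥ v)]

theorem abs_dotProduct_le_norm3_mul (u v : Fin 3 → ℝ) : |u ⬝ᵥ v| ≤ norm3 u * norm3 v := by
  rw [norm3, norm3, ← Real.sqrt_mul (dotProduct_self_nonneg u)]
  refine Real.abs_le_sqrt ?_
  have := dotProduct_self_nonneg (u ⨯₃ v)
  rw [cross_dot_cross, dotProduct_comm v u] at this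
  linarith

theorem HasDerivAt.const_dotProduct {ι : Type*} [Fintype ι] {f : ℝ → ι → ℝ} {f' : ι → ℝ} {t : ℝ}
    (c : ι → ℝ) (hf : HasDerivAt f f' t) : HasDerivAt (fun s => c ⬝ᵥ f s) (c ⬝ᵥ f') t := by
  simpa [dotProduct] using HasDerivAt.fun_sum fun i _ => (hasDerivAt_pi.mp hf i).const_mul (c i)

theorem dotProduct_cross_cross (c γ v : Fin 3 → ℝ) :
    c ⬝ᵥ γ ⨯₃ (γ ⨯₃ v) = -(v ⨯₃ γ ⬝ᵥ c ⨯₃ γ) := by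
  rw [triple_product_permutation, triple_product_permutation, ← cross_anticomm v γ, neg_dotProduct]

theorem sub_smul_sub_cross_self (v e γ : Fin 3 → ℝ) (c : ℝ) :
    (v - c • (e - γ)) ⨯₃ γ = v ⨯₃ γ - c • e ⨯₃ γ := by
  simp [map_sub, map_smul, cross_self]

theorem neg_cross_dotProduct_le_of_norm3_eq_one {γ : Fin 3 → ℝ} (hγ : norm3 γ = 1)
    (u w : Fin 3 → ℝ) : -(u ⨯₃ γ ⬝ᵥ w) ≤ norm3 u * norm3 w :=
  calc -(u ⨯₃ γ ⬝ᵥ w) ≤ |u ⨯₃ γ ⬝ᵥ w| := neg_le_abs _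
    _ ≤ norm3 (u ⨯₃ γ) * norm3 w := abs_dotProduct_le_norm3_mul _ _
    _ ≤ norm3 u * norm3 γ * norm3 w := by
      gcongr
      · exact Real.sqrt_nonneg _
      · exact norm3_cross_le u γ
    _ = norm3 u * norm3 w := by rw [hγ, mul_one]

theorem stmt_4_general (g k1v k1r : ℝ) (h3 : 0 < k1r)
    (v γ : ℝ → Fin 3 → ℝ) (hγunit : ∀ t, norm3 (γ t) = 1)
    (hγ : ∀ t, HasDerivAt γ (-(k1r • cross3 (γ t) (cross3 (γ t) (v t)))) t)
    (δ : ℝ → Fin 3 → ℝ) (hδ : ∀ t, δ t = v t - (g / k1v) • (e3 - γ t)) :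
    ∀ t,
      HasDerivAt (fun s => 1 - e3 ⬝ᵥ γ s)
        (-(k1r * (cross3 (δ t) (γ t) ⬝ᵥ cross3 e3 (γ t)))
          - (g * k1r / k1v) * (cross3 e3 (γ t) ⬝ᵥ cross3 e3 (γ t))) t ∧
      -(k1r * (cross3 (δ t) (γ t) ⬝ᵥ cross3 e3 (γ t)))
          - (g * k1r / k1v) * (cross3 e3 (γ t) ⬝ᵥ cross3 e3 (γ t)) ≤
        k1r * norm3 (δ t) * norm3 (cross3 e3 (γ t))
          - (g * k1r / k1v) * (norm3 (cross3 e3 (γ t)))^2 := by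
  simp only [cross3_eq_crossProduct] at hγ ⊢
  intro t
  constructor
  · refine ((hasDerivAt_const t (1 : ℝ)).sub ((hγ t).const_dotProduct e3)).congr_deriv ?_
    rw [hδ t, sub_smul_sub_cross_self, sub_dotProduct, smul_dotProduct, dotProduct_neg,
      dotProduct_smul, dotProduct_cross_cross, smul_eq_mul, smul_eq_mul]
    ring
  · have hbound := mul_le_mul_of_nonneg_left
      (neg_cross_dotProduct_le_of_norm3_eq_one (hγunit t) (δ t) (e3 ⨯₃ γ t)) h3.le
    rw [norm3_sq]
    linarith

/-- the derivative of `1 − e₃ᵀγ̄` along the error system equals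
`−k₁ʳ(δ×γ̄)ᵀ(e₃×γ̄) − (g k₁ʳ/k₁ᵛ)|e₃×γ̄|²` and is bounded above by
`k₁ʳ|δ||e₃×γ̄| − (g k₁ʳ/k₁ᵛ)|e₃×γ̄|²`. -/
theorem stmt_4 (g k1v k1r : ℝ) (hg : 0 < g) (h1 : 0 < k1v) (h3 : 0 < k1r)
    (v γ : ℝ → Fin 3 → ℝ) (hγunit : ∀ t, norm3 (γ t) = 1)
    (hγ : ∀ t, HasDerivAt γ (-(k1r • cross3 (γ t) (cross3 (γ t) (v t)))) t)
    (δ : ℝ → Fin 3 → ℝ) (hδ : ∀ t, δ t = v t - (g / k1v) • (e3 - γ t)) :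
    ∀ t,
      HasDerivAt (fun s => 1 - e3 ⬝ᵥ γ s)
        (-(k1r * (cross3 (δ t) (γ t) ⬝ᵥ cross3 e3 (γ t)))
          - (g * k1r / k1v) * (cross3 e3 (γ t) ⬝ᵥ cross3 e3 (γ t))) t ∧
      -(k1r * (cross3 (δ t) (γ t) ⬝ᵥ cross3 e3 (γ t)))
          - (g * k1r / k1v) * (cross3 e3 (γ t) ⬝ᵥ cross3 e3 (γ t)) ≤
        k1r * norm3 (δ t) * norm3 (cross3 e3 (γ t))
          - (g * k1r / k1v) * (norm3 (cross3 e3 (γ t)))^2 :=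
  stmt_4_general g k1v k1r h3 v γ hγunit hγ δ hδ
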